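/- Let I be an ideal of K[[x_1,…,x_n]] generated by F_1,…,F_k, let Λ be a positive linear form, and let l_0 be the maximum of Λ over the vertices of N_Λ(I). If μ ≥ l_0 and G_1,…,G_k satisfy G_i − F_i ∈ n_{Λ,μ+1} for all i (i.e., the G_i agree with the F_i up to Λ-degree μ), then the ideal I_μ = (G_1,…,G_k) satisfies N_Λ(I_μ) ⊇ N_Λ(I). -/

import Mathlib

noncomputable section
open MvPowerSeries

/-- The value of the positive linear form with coefficients `lam` at `β`. -/
def LamVal {n : ℕ} (lam : Fin n → ℕ) (β : Fin n →₀ ℕ) : ℕ := ∑ j, lam j * β j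

/-- The strict total order on `ℕ^n` induced by the positive linear form `lam`:
lexicographic comparison of `(Λ β, β₁, …, βₙ)`. -/
def LamLt {n : ℕ} (lam : Fin n → ℕ) (β γ : Fin n →₀ ℕ) : Prop :=
  LamVal lam β < LamVal lam γ ∨ (LamVal lam β = LamVal lam γ ∧ toLex ⇑β < toLex ⇑γ)

/-- `β` is the initial exponent of `F` w.r.t. the order induced by `lam`. -/
def IsInexp {n : ℕ} {K : Type*} [Field K] (lam : Fin n → ℕ)
    (F : MvPowerSeries (Fin n) K) (β : Fin n →₀ ℕ) : Prop :=
  coeff β F ≠ 0 ∧ ∀ γ, coeff γ F ≠ 0 → ¬ LamLt lam γ β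

/-- The diagram of initial exponents of an ideal. -/
def Diagram {n : ℕ} {K : Type*} [Field K] (lam : Fin n → ℕ)
    (I : Ideal (MvPowerSeries (Fin n) K)) : Set (Fin n →₀ ℕ) :=
  {β | ∃ F ∈ I, F ≠ 0 ∧ IsInexp lam F β}

/-- The ideal `n_{Λ,μ}` generated by the monomials `x^β` with `Λ(β) ≥ μ`. -/
def NIdeal {n : ℕ} (K : Type*) [Field K] (lam : Fin n → ℕ) (μ : ℕ) :
    Ideal (MvPowerSeries (Fin n) K) :=
  Ideal.span {F | ∃ β : Fin n →₀ ℕ, μ ≤ LamVal lam β ∧ F = monomial β (1 : K)}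

/-- The maximal ideal `(x_1, …, x_n)` of `K[[x_1,…,x_n]]`. -/
def MaxId {n : ℕ} (K : Type*) [Field K] : Ideal (MvPowerSeries (Fin n) K) :=
  Ideal.span (Set.range (X : Fin n → MvPowerSeries (Fin n) K))

/-- `V` generates `N` under addition of arbitrary elements of `ℕ^n`. -/
def GeneratesDiag {n : ℕ} (V N : Set (Fin n →₀ ℕ)) : Prop :=
  {x | ∃ v ∈ V, ∃ β, x = v + β} = N

/-- `V` is the set of vertices of the diagram `N`. -/
def IsVertices {n : ℕ} (V : Finset (Fin n →₀ ℕ)) (N : Set (Fin n →₀ ℕ)) : Prop :=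
  ↑V ⊆ N ∧ GeneratesDiag ↑V N ∧
    ∀ W : Finset (Fin n →₀ ℕ), ↑W ⊆ N → GeneratesDiag ↑W N → V ⊆ W

/-- The Hilbert–Samuel function of `K[[x]]/I`. -/
def HSF {n : ℕ} {K : Type*} [Field K] (I : Ideal (MvPowerSeries (Fin n) K)) (η : ℕ) : ℕ :=
  Module.finrank K (MvPowerSeries (Fin n) K ⧸ (I + MaxId K ^ (η + 1)))

end

/-!
Every point of `N_Λ(I)` is a vertex `v` plus some `δ`. Write a series of `I` with initial exponent
`v` as `∑ cᵢ Fᵢ`; then `∑ cᵢ Gᵢ` differs from it only in `Λ`-degrees `> μ ≥ Λ(v)`, so it still has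
initial exponent `v`, and multiplying by `x^δ` moves that exponent to `v + δ`.
-/

open MvPowerSeries

lemma lamVal_add {n : ℕ} (lam : Fin n → ℕ) (a b : Fin n →₀ ℕ) :
    LamVal lam (a + b) = LamVal lam a + LamVal lam b := by
  simp [LamVal, mul_add, Finset.sum_add_distrib]

lemma LamLt.lamVal_le {n : ℕ} {lam : Fin n → ℕ} {β γ : Fin n →₀ ℕ} (h : LamLt lam β γ) :
    LamVal lam β ≤ LamVal lam γ := by
  rcases h with h | ⟨h, -⟩ <;> omega

lemma LamLt.of_add_left {n : ℕ} {lam : Fin n → ℕ} {δ β γ : Fin n →₀ ℕ}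
    (h : LamLt lam (δ + β) (δ + γ)) : LamLt lam β γ := by
  simp only [LamLt, lamVal_add, Finsupp.coe_add] at h
  rcases h with h | ⟨h, i, hlt_before, hlt⟩
  · exact Or.inl (by omega)
  · exact Or.inr ⟨by omega, i, fun j hj => add_left_cancel (hlt_before j hj),
      lt_of_add_lt_add_left hlt⟩

lemma coeff_eq_zero_of_mem_nIdeal {n : ℕ} {K : Type*} [Field K] {lam : Fin n → ℕ} {m : ℕ}
    {P : MvPowerSeries (Fin n) K} (hP : P ∈ NIdeal K lam m) {γ : Fin n →₀ ℕ}
    (hγ : LamVal lam γ < m) : coeff γ P = 0 := by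
  classical
  induction hP using Submodule.span_induction generalizing γ with
  | mem _ h =>
    obtain ⟨β, hβ, rfl⟩ := h
    rw [coeff_monomial, if_neg]
    rintro rfl
    omega
  | zero => simp
  | add _ _ _ _ ha hb => simp [ha hγ, hb hγ]
  | smul r Q _ hQ =>
    rw [smul_eq_mul, coeff_mul]
    refine Finset.sum_eq_zero fun ⟨p, q⟩ hpq => ?_
    rw [Finset.HasAntidiagonal.mem_antidiagonal] at hpq
    have hq : LamVal lam q ≤ LamVal lam γ := by
      rw [← hpq, lamVal_add]; exact Nat.le_add_left _ _
    rw [hQ (hq.trans_lt hγ), mul_zero]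

lemma Ideal.exists_mem_span_sub_mem {R ι : Type*} [CommRing R] {J : Ideal R} {F G : ι → R}
    (hFG : ∀ i, G i - F i ∈ J) {H : R} (hH : H ∈ Ideal.span (Set.range F)) :
    ∃ H' ∈ Ideal.span (Set.range G), H' - H ∈ J := by
  have hle : Ideal.span (Set.range F) ≤ Ideal.span (Set.range G) ⊔ J := by
    rw [Ideal.span_le]
    rintro _ ⟨i, rfl⟩
    rw [← sub_sub_cancel (G i) (F i)]
    exact Ideal.sub_mem _ (Ideal.mem_sup_left (Ideal.subset_span ⟨i, rfl⟩))
      (Ideal.mem_sup_right (hFG i))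
  obtain ⟨H', hH', D, hD, rfl⟩ := Submodule.mem_sup.mp (hle hH)
  exact ⟨H', hH', by simpa using J.neg_mem hD⟩

section IsInexp

variable {n : ℕ} {K : Type*} [Field K] {lam : Fin n → ℕ}

lemma IsInexp.ne_zero {F : MvPowerSeries (Fin n) K} {β : Fin n →₀ ℕ} (h : IsInexp lam F β) :
    F ≠ 0 := by
  rintro rfl
  exact h.1 (map_zero _)

lemma IsInexp.of_coeff_eq {F F' : MvPowerSeries (Fin n) K} {β : Fin n →₀ ℕ}
    (h : IsInexp lam F β) (hFF' : ∀ γ, LamVal lam γ ≤ LamVal lam β → coeff γ F' = coeff γ F) :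
    IsInexp lam F' β := by
  refine ⟨hFF' β le_rfl ▸ h.1, fun γ hγ hlt => ?_⟩
  rw [hFF' γ hlt.lamVal_le] at hγ
  exact h.2 γ hγ hlt

lemma IsInexp.monomial_mul {F : MvPowerSeries (Fin n) K} {β : Fin n →₀ ℕ}
    (h : IsInexp lam F β) (δ : Fin n →₀ ℕ) :
    IsInexp lam (monomial δ (1 : K) * F) (δ + β) := by
  refine ⟨by rw [coeff_add_monomial_mul, one_mul]; exact h.1, fun γ hγ hlt => ?_⟩
  rw [coeff_monomial_mul] at hγ
  split_ifs at hγ with hδγ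
  · rw [one_mul] at hγ
    rw [← add_tsub_cancel_of_le hδγ] at hlt
    exact h.2 (γ - δ) hγ hlt.of_add_left
  · exact hγ rfl

lemma add_mem_diagram {I : Ideal (MvPowerSeries (Fin n) K)} {β : Fin n →₀ ℕ}
    (hβ : β ∈ Diagram lam I) (δ : Fin n →₀ ℕ) : β + δ ∈ Diagram lam I := by
  obtain ⟨F, hF, -, hβF⟩ := hβ
  have hδβ := hβF.monomial_mul δ
  rw [add_comm δ] at hδβ
  exact ⟨_, I.mul_mem_left _ hF, hδβ.ne_zero, hδβ⟩

end IsInexp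

open MvPowerSeries in
theorem stmt9_general {n : ℕ} {K : Type*} [Field K] (lam : Fin n → ℕ)
    (k : ℕ) (F G : Fin k → MvPowerSeries (Fin n) K)
    (V : Finset (Fin n →₀ ℕ))
    (hV : IsVertices V (Diagram lam (Ideal.span (Set.range F))))
    (μ : ℕ) (hμ : ∀ β ∈ V, LamVal lam β ≤ μ)
    (hFG : ∀ i, G i - F i ∈ NIdeal K lam (μ + 1)) :
    Diagram lam (Ideal.span (Set.range F)) ⊆ Diagram lam (Ideal.span (Set.range G)) := by
  rintro β hβ
  obtain ⟨hVsub, hgen, -⟩ := hV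
  rw [← hgen] at hβ
  obtain ⟨v, hvV, δ, rfl⟩ := hβ
  obtain ⟨H, hHF, -, hHv⟩ := hVsub hvV
  obtain ⟨H', hH'G, hdiff⟩ := Ideal.exists_mem_span_sub_mem hFG hHF
  have hH'v : IsInexp lam H' v := hHv.of_coeff_eq fun γ hγ =>
    sub_eq_zero.mp <| by
      rw [← map_sub]
      exact coeff_eq_zero_of_mem_nIdeal hdiff (by linarith [hμ v hvV])
  exact add_mem_diagram ⟨H', hH'G, hH'v.ne_zero, hH'v⟩ δ

open MvPowerSeries in
/-- If `μ ≥ l₀ = max{Λ(β) : β vertex of N_Λ(I)}` and the generators `G_i` agree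
with the `F_i` up to `Λ`-degree `μ` (i.e. `G_i − F_i ∈ n_{Λ,μ+1}`), then
`N_Λ((G_1,…,G_k)) ⊇ N_Λ((F_1,…,F_k))`. -/
theorem stmt9 {n : ℕ} {K : Type*} [Field K] (lam : Fin n → ℕ) (hpos : ∀ j, 0 < lam j)
    (k : ℕ) (F G : Fin k → MvPowerSeries (Fin n) K)
    (V : Finset (Fin n →₀ ℕ))
    (hV : IsVertices V (Diagram lam (Ideal.span (Set.range F))))
    (μ : ℕ) (hμ : ∀ β ∈ V, LamVal lam β ≤ μ)
    (hFG : ∀ i, G i - F i ∈ NIdeal K lam (μ + 1)) :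
    Diagram lam (Ideal.span (Set.range F)) ⊆ Diagram lam (Ideal.span (Set.range G)) :=
  stmt9_general lam k F G V hV μ hμ hFG
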